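/- arXiv:2306.15973 — 4 statements merged into one kernel-verified Lean document; each statement's English description precedes it below -/
import Mathlib

section
/- Let K/ℚ be a Galois extension, α ∈ K, p a rational prime unramified in K, and q a prime. Suppose that for every prime 𝔓 of K above p there exists β ∈ O_K with α ≡ β^q (mod 𝔓). Then N_{K/ℚ}(α) is a q-th power residue modulo p, i.e., there exists b ∈ ℤ with N_{K/ℚ}(α) ≡ b^q (mod p). -/
open NumberField

open UniqueFactorizationMonoid in
private lemma aux_stepA (K : Type*) [Field K] [NumberField K]
    (α : 𝓞 K) (p q : ℕ) (hp : p.Prime)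
    (hunram : ∀ P : Ideal (𝓞 K), P.IsMaximal → (p : 𝓞 K) ∈ P →
      Ideal.ramificationIdx' (Ideal.span {(p : ℤ)}) P = 1)
    (hpow : ∀ P : Ideal (𝓞 K), P.IsMaximal → (p : 𝓞 K) ∈ P →
      ∃ β : 𝓞 K, α - β ^ q ∈ P) :
    ∃ c : 𝓞 K, α - c ^ q ∈ Ideal.span {(p : 𝓞 K)} := by
  classical
  have hpK : (p : 𝓞 K) ≠ 0 := by
    exact_mod_cast (Nat.cast_ne_zero (R := 𝓞 K)).mpr hp.ne_zero
  set I : Ideal (𝓞 K) := Ideal.span {(p : 𝓞 K)} with hIdef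
  have hI0 : I ≠ ⊥ := by
    simpa [hIdef, Ideal.span_singleton_eq_bot] using hpK
  have hmap : Ideal.map (algebraMap ℤ (𝓞 K)) (Ideal.span {(p : ℤ)}) = I := by
    rw [Ideal.map_span]; norm_num; rfl
  set v := normalizedFactors I with hv
  have hprod : v.prod = I := by
    simpa [associated_iff_eq] using (prod_normalizedFactors hI0)
  have hQfacts : ∀ Q ∈ v, Q ≠ ⊥ ∧ Q.IsMaximal ∧ (p : 𝓞 K) ∈ Q := by
    intro Q hQ
    have hQp : Prime Q := prime_of_normalized_factor Q hQ
    have hQ0 : Q ≠ ⊥ := hQp.ne_zero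
    have hmax : Q.IsMaximal := Ideal.IsPrime.isMaximal (Ideal.isPrime_of_prime hQp) hQ0
    have hle : I ≤ Q := Ideal.le_of_dvd (dvd_of_mem_normalizedFactors hQ)
    exact ⟨hQ0, hmax, hle (Ideal.mem_span_singleton_self _)⟩
  have hcount : ∀ Q ∈ v, v.count Q = 1 := by
    intro Q hQ
    obtain ⟨hQ0, hmax, hpmem⟩ := hQfacts Q hQ
    have := hunram Q hmax hpmem
    rwa [Ideal.IsDedekindDomain.ramificationIdx'_eq_normalizedFactors_count
      (by rw [hmap]; exact hI0) hmax.isPrime hQ0, hmap, ← hv] at this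
  have hnodup : v.Nodup := by
    rw [Multiset.nodup_iff_count_le_one]
    intro Q
    by_cases h : Q ∈ v
    · exact le_of_eq (hcount Q h)
    · simp [Multiset.count_eq_zero_of_notMem h]
  set s : Finset (Ideal (𝓞 K)) := v.toFinset with hs
  have hβ : ∀ Q : s, ∃ β : 𝓞 K, α - β ^ q ∈ (Q : Ideal (𝓞 K)) := by
    rintro ⟨Q, hQ⟩
    obtain ⟨_, hmax, hpmem⟩ := hQfacts Q (Multiset.mem_toFinset.mp hQ)
    exact hpow Q hmax hpmem
  choose β hβmem using hβ
  have hcopr : Pairwise fun (i j : s) => IsCoprime ((i : Ideal (𝓞 K))) (j : Ideal (𝓞 K)) := by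
    rintro ⟨Q1, h1⟩ ⟨Q2, h2⟩ hne
    have hne' : Q1 ≠ Q2 := fun h => hne (by simpa using h)
    have m1 := (hQfacts Q1 (Multiset.mem_toFinset.mp h1)).2.1
    have m2 := (hQfacts Q2 (Multiset.mem_toFinset.mp h2)).2.1
    rw [Ideal.isCoprime_iff_sup_eq]
    exact Ideal.IsMaximal.coprime_of_ne m1 m2 hne'
  obtain ⟨γ, hγ⟩ := Ideal.exists_forall_sub_mem_ideal
    (I := fun Q : s => (Q : Ideal (𝓞 K))) hcopr β
  have hmemQ : ∀ Q : s, α - γ ^ q ∈ (Q : Ideal (𝓞 K)) := by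
    intro Q
    have h1 : Ideal.Quotient.mk (Q : Ideal (𝓞 K)) γ = Ideal.Quotient.mk _ (β Q) :=
      Ideal.Quotient.eq.mpr (hγ Q)
    have h2 : Ideal.Quotient.mk (Q : Ideal (𝓞 K)) α = Ideal.Quotient.mk _ ((β Q) ^ q) :=
      Ideal.Quotient.eq.mpr (hβmem Q)
    refine Ideal.Quotient.eq.mp ?_
    rw [h2, map_pow, map_pow, h1]
  refine ⟨γ, ?_⟩
  have hsv : s.val = v := Multiset.dedup_eq_self.mpr hnodup
  have hIprod : I = ∏ Q ∈ s, Q := by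
    rw [← hprod, Finset.prod_eq_multiset_prod, hsv, Multiset.map_id']
  have hdvd : I ∣ Ideal.span {α - γ ^ q} := by
    rw [hIprod]
    refine Finset.prod_dvd_of_coprime ?_ ?_
    · intro Q1 h1 Q2 h2 hne
      exact Ideal.isCoprime_iff_sup_eq.mpr
        (Ideal.IsMaximal.coprime_of_ne
          (hQfacts Q1 (by simpa [hs] using h1)).2.1
          (hQfacts Q2 (by simpa [hs] using h2)).2.1 hne)
    · intro Q hQ
      rw [Ideal.dvd_iff_le, Ideal.span_le, Set.singleton_subset_iff]
      exact hmemQ ⟨Q, hQ⟩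
  exact Ideal.span_le.mp (Ideal.le_of_dvd hdvd) rfl

private lemma aux_stepB (K : Type*) [Field K] [NumberField K] (α c : 𝓞 K) (p q : ℕ)
    (hc : α - c ^ q ∈ Ideal.span {(p : 𝓞 K)}) :
    ∃ b : ℤ, Algebra.norm ℤ α ≡ b ^ q [ZMOD p] := by
  classical
  refine ⟨Algebra.norm ℤ c, ?_⟩
  obtain ⟨d, hd⟩ := Ideal.mem_span_singleton.mp hc
  let b := Module.Free.chooseBasis ℤ (𝓞 K)
  have key : ((Algebra.leftMulMatrix b α).map (Int.castRingHom (ZMod p)))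
      = (Algebra.leftMulMatrix b (c ^ q)).map (Int.castRingHom (ZMod p)) := by
    have hsub : Algebra.leftMulMatrix b α - Algebra.leftMulMatrix b (c ^ q)
        = (p : ℤ) • Algebra.leftMulMatrix b d := by
      rw [← map_sub, hd]
      have : (p : 𝓞 K) * d = (p : ℤ) • d := by simp [zsmul_eq_mul]
      rw [this, map_zsmul]
    have hsub' : ∀ i j, Algebra.leftMulMatrix b α i j
        = Algebra.leftMulMatrix b (c ^ q) i j + (p : ℤ) * Algebra.leftMulMatrix b d i j := by
      intro i j
      have := congrArg (fun M : Matrix _ _ ℤ => M i j) hsub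
      simp only [Matrix.sub_apply, Matrix.smul_apply, smul_eq_mul] at this
      linarith
    ext i j
    simp only [Matrix.map_apply, hsub']
    push_cast
    simp
  have h1 : ((Algebra.norm ℤ α : ℤ) : ZMod p) = ((Algebra.norm ℤ (c ^ q) : ℤ) : ZMod p) := by
    rw [Algebra.norm_eq_matrix_det b, Algebra.norm_eq_matrix_det b]
    rw [show ((((Algebra.leftMulMatrix b) α).det : ℤ) : ZMod p)
        = (Int.castRingHom (ZMod p)) ((Algebra.leftMulMatrix b) α).det from rfl]
    rw [show ((((Algebra.leftMulMatrix b) (c ^ q)).det : ℤ) : ZMod p)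
        = (Int.castRingHom (ZMod p)) ((Algebra.leftMulMatrix b) (c ^ q)).det from rfl]
    rw [RingHom.map_det, RingHom.map_det, RingHom.mapMatrix_apply, RingHom.mapMatrix_apply, key]
  rw [map_pow] at h1
  exact (ZMod.intCast_eq_intCast_iff _ _ _).mp (by exact_mod_cast h1)

theorem stmt_1 (K : Type*) [Field K] [NumberField K] [IsGalois ℚ K]
    (α : 𝓞 K) (p q : ℕ) (hp : p.Prime) (hq : q.Prime)
    (hunram : ∀ P : Ideal (𝓞 K), P.IsMaximal → (p : 𝓞 K) ∈ P →
      Ideal.ramificationIdx' (Ideal.span {(p : ℤ)}) P = 1)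
    (hcop : ∀ P : Ideal (𝓞 K), P.IsMaximal → (p : 𝓞 K) ∈ P → α ∉ P)
    (hpow : ∀ P : Ideal (𝓞 K), P.IsMaximal → (p : 𝓞 K) ∈ P →
      ∃ β : 𝓞 K, α - β ^ q ∈ P) :
    ∃ b : ℤ, Algebra.norm ℤ α ≡ b ^ q [ZMOD p] := by
  obtain ⟨c, hc⟩ := aux_stepA K α p q hp hunram hpow
  exact aux_stepB K α c p q hc
end

section
/- Let n₁, …, n_m be integers greater than 1 whose product is squarefree, and let c₀, c₁, …, c_m be nonzero rationals. Set α = c₀ + c₁√n₁ + ⋯ + c_m√n_m ∈ K = ℚ(√n₁, …, √n_m). Then for every σ ∈ Gal(K/ℚ) with σ ≠ id, we have α/σ(α) ≠ ±1. -/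
open Polynomial in
private lemma sqrtNatIsIntegral (k : ℕ) : IsIntegral ℚ (Real.sqrt k) := by
  refine ⟨X ^ 2 - C (k : ℚ), monic_X_pow_sub_C _ two_ne_zero, ?_⟩
  have : Real.sqrt k ^ 2 = (k : ℝ) := Real.sq_sqrt (by positivity)
  simp [this]

private lemma repLemma {S : Set ℝ} {α : ℝ} (hα : α * α ∈ Algebra.adjoin ℚ S) :
    ∀ x ∈ Algebra.adjoin ℚ (insert α S),
      ∃ a b : ℝ, a ∈ Algebra.adjoin ℚ S ∧ b ∈ Algebra.adjoin ℚ S ∧ x = a + b * α := by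
  intro x hx
  induction hx using Algebra.adjoin_induction with
  | mem y hy =>
    rcases hy with rfl | hy
    · exact ⟨0, 1, Subalgebra.zero_mem _, Subalgebra.one_mem _, by ring⟩
    · exact ⟨y, 0, Algebra.subset_adjoin hy, Subalgebra.zero_mem _, by ring⟩
  | algebraMap r =>
    exact ⟨algebraMap ℚ ℝ r, 0, Subalgebra.algebraMap_mem _ r, Subalgebra.zero_mem _, by ring⟩
  | add u v hu hv ihu ihv =>
    obtain ⟨a, b, ha, hb, rfl⟩ := ihu
    obtain ⟨c, d, hc, hd, rfl⟩ := ihv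
    exact ⟨a + c, b + d, add_mem ha hc, add_mem hb hd, by ring⟩
  | mul u v hu hv ihu ihv =>
    obtain ⟨a, b, ha, hb, rfl⟩ := ihu
    obtain ⟨c, d, hc, hd, rfl⟩ := ihv
    exact ⟨a * c + b * d * (α * α), a * d + b * c,
      add_mem (mul_mem ha hc) (mul_mem (mul_mem hb hd) hα),
      add_mem (mul_mem ha hd) (mul_mem hb hc), by ring⟩

private lemma memIF {S : Set ℝ} (h : ∀ y ∈ S, IsIntegral ℚ y) (x : ℝ) :
    x ∈ IntermediateField.adjoin ℚ S ↔ x ∈ Algebra.adjoin ℚ S := by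
  rw [← IntermediateField.adjoin_toSubalgebra_of_isAlgebraic (fun y hy => (h y hy).isAlgebraic),
    IntermediateField.mem_toSubalgebra]

private lemma keyLemma (m : ℕ) (n : Fin m → ℕ) (hn : ∀ i, 1 < n i) (T : Finset (Fin m)) :
    ∀ d : ℕ, 1 < d → Squarefree (d * ∏ i ∈ T, n i) →
      Real.sqrt d ∉ IntermediateField.adjoin ℚ ((fun i => Real.sqrt (n i)) '' ↑T) := by
  induction T using Finset.induction_on with
  | empty =>
    intro d hd hsq hmem
    simp only [Finset.coe_empty, Set.image_empty, IntermediateField.adjoin_empty] at hmem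
    rw [IntermediateField.mem_bot] at hmem
    obtain ⟨r, hr⟩ := hmem
    have hns : ¬ IsSquare d := by
      rintro ⟨r, rfl⟩
      have hr1 : r = 1 := Nat.isUnit_iff.mp (hsq r ⟨1, by ring⟩)
      subst hr1; norm_num at hd
    exact (irrational_sqrt_natCast_iff.mpr hns) ⟨r, by exact_mod_cast hr⟩
  | @insert k T hk ih =>
    intro d hd hsq hmem
    have hnk0 : (0:ℝ) < (n k : ℝ) := by have := hn k; positivity
    set s : ℝ := Real.sqrt (n k) with hs
    have hs2 : s * s = (n k : ℝ) := Real.mul_self_sqrt (le_of_lt hnk0)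
    have hspos : 0 < s := Real.sqrt_pos.mpr hnk0
    have himg : ((fun i => Real.sqrt (n i)) '' ↑(insert k T))
        = insert s ((fun i => Real.sqrt (n i)) '' ↑T) := by
      rw [Finset.coe_insert, Set.image_insert_eq]
    have hint : ∀ y ∈ (fun i => Real.sqrt (n i)) '' (↑T : Set (Fin m)), IsIntegral ℚ y := by
      rintro y ⟨i, -, rfl⟩; exact sqrtNatIsIntegral _
    have hint' : ∀ y ∈ insert s ((fun i => Real.sqrt (n i)) '' (↑T : Set (Fin m))),
        IsIntegral ℚ y := by
      rintro y (rfl | hy)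
      · exact sqrtNatIsIntegral _
      · exact hint y hy
    rw [himg, memIF hint'] at hmem
    obtain ⟨a, b, ha, hb, hab⟩ :=
      repLemma (by rw [hs2]; exact_mod_cast Subalgebra.natCast_mem _ (n k)) _ hmem
    rw [← memIF hint] at ha hb
    set F := IntermediateField.adjoin ℚ ((fun i => Real.sqrt (n i)) '' (↑T : Set (Fin m))) with hF
    have hprod : d * ∏ i ∈ insert k T, n i = (d * n k) * ∏ i ∈ T, n i := by
      rw [Finset.prod_insert hk]; ring
    have hsq1 : Squarefree ((d * n k) * ∏ i ∈ T, n i) := hprod ▸ hsq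
    have hdpos : (0:ℝ) < (d:ℝ) := by have := hd; positivity
    by_cases hb0 : b = 0
    · refine ih d hd (hsq1.squarefree_of_dvd ⟨n k, by ring⟩) ?_
      rw [hab, hb0, zero_mul, add_zero]; exact ha
    by_cases ha0 : a = 0
    · have hdnk : 1 < d * n k := by
        have h1 := hn k
        calc 1 < d := hd
          _ ≤ d * n k := Nat.le_mul_of_pos_right d (by omega)
      refine ih (d * n k) hdnk (hsq1.squarefree_of_dvd (dvd_refl _)) ?_
      have heq : Real.sqrt (d * n k : ℕ) = b * (n k : ℝ) := by
        push_cast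
        rw [Real.sqrt_mul (le_of_lt hdpos), hab, ha0, zero_add, ← hs, mul_assoc, hs2]
      rw [heq]
      exact mul_mem hb (by exact_mod_cast IntermediateField.natCast_mem F (n k))
    · refine ih (n k) (hn k) (hsq1.squarefree_of_dvd ⟨d, by ring⟩) ?_
      have h2 : (d:ℝ) = a * a + b * b * (n k : ℝ) + (2 * a * b) * s := by
        calc (d:ℝ) = Real.sqrt d * Real.sqrt d := (Real.mul_self_sqrt (le_of_lt hdpos)).symm
          _ = a * a + b * b * (s * s) + (2 * a * b) * s := by rw [hab]; ring
          _ = a * a + b * b * (n k : ℝ) + (2 * a * b) * s := by rw [hs2]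
      have h3 : s = (2 * a * b)⁻¹ * ((d:ℝ) - a * a - b * b * (n k : ℝ)) := by
        have h2ab : (2 * a * b) ≠ 0 := by positivity
        field_simp
        linarith [h2]
      rw [← hs, h3]
      refine mul_mem (inv_mem (mul_mem (mul_mem ?_ ha) hb))
        (sub_mem (sub_mem ?_ (mul_mem ha ha)) (mul_mem (mul_mem hb hb) ?_))
      · exact_mod_cast IntermediateField.natCast_mem F 2
      · exact_mod_cast IntermediateField.natCast_mem F d
      · exact_mod_cast IntermediateField.natCast_mem F (n k)

private lemma indepLemma (m : ℕ) (n : Fin m → ℕ) (hn : ∀ i, 1 < n i)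
    (hsq : Squarefree (∏ i, n i)) (q₀ : ℚ) (q : Fin m → ℚ)
    (h : (q₀ : ℝ) + ∑ i, (q i : ℝ) * Real.sqrt (n i) = 0) : q₀ = 0 ∧ ∀ i, q i = 0 := by
  have hq : ∀ j, q j = 0 := by
    intro j
    by_contra hj
    set F := IntermediateField.adjoin ℚ
      ((fun i => Real.sqrt (n i)) '' ↑(Finset.univ.erase j)) with hF
    apply keyLemma m n hn (Finset.univ.erase j) (n j) (hn j)
      (by rwa [Finset.mul_prod_erase _ _ (Finset.mem_univ j)])
    have hsum := h
    rw [← Finset.add_sum_erase Finset.univ (fun i => (q i : ℝ) * Real.sqrt (n i))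
      (Finset.mem_univ j)] at hsum
    have h' : Real.sqrt (n j) = (q j : ℝ)⁻¹
        * (-(q₀ : ℝ) - ∑ i ∈ Finset.univ.erase j, (q i : ℝ) * Real.sqrt (n i)) := by
      have hqj : (q j : ℝ) ≠ 0 := by exact_mod_cast hj
      field_simp
      linarith [hsum]
    rw [h']
    refine mul_mem (inv_mem ?_) (sub_mem (neg_mem ?_) (sum_mem fun i hi => ?_))
    · exact SubfieldClass.ratCast_mem F (q j)
    · exact SubfieldClass.ratCast_mem F q₀
    · exact mul_mem (SubfieldClass.ratCast_mem F (q i))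
        (IntermediateField.subset_adjoin _ _ ⟨i, hi, rfl⟩)
  refine ⟨?_, hq⟩
  have : ∑ i, (q i : ℝ) * Real.sqrt (n i) = 0 := by
    apply Finset.sum_eq_zero; intro i _; rw [hq i]; simp
  rw [this, add_zero] at h
  exact_mod_cast h


theorem stmt_10 (m : ℕ) (n : Fin m → ℕ) (hn : ∀ i, 1 < n i)
    (hsq : Squarefree (∏ i, n i))
    (c₀ : ℚ) (c : Fin m → ℚ) (hc₀ : c₀ ≠ 0) (hc : ∀ i, c i ≠ 0)
    (K : IntermediateField ℚ ℝ)
    (hK : K = IntermediateField.adjoin ℚ (Set.range fun i => Real.sqrt (n i)))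
    (σ : K ≃ₐ[ℚ] K) (hσ : σ ≠ AlgEquiv.refl)
    (x : K) (hx : (x : ℝ) = c₀ + ∑ i, (c i : ℝ) * Real.sqrt (n i)) :
    σ x ≠ x ∧ σ x ≠ -x := by
  classical
  have hmem : ∀ i, Real.sqrt (n i) ∈ K := by
    intro i; rw [hK]; exact IntermediateField.subset_adjoin _ _ ⟨i, rfl⟩
  set s : Fin m → K := fun i => ⟨Real.sqrt (n i), hmem i⟩ with hsdef
  have hnR : ∀ i, (0:ℝ) < (n i : ℝ) := fun i => by have := hn i; positivity
  have hsq2 : ∀ i, (Real.sqrt (n i)) ^ 2 = (n i : ℝ) := fun i => Real.sq_sqrt (le_of_lt (hnR i))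
  have hxK : x = (c₀ : K) + ∑ i, (c i : K) * s i := by
    apply Subtype.ext
    rw [hx]
    push_cast
    rfl
  have hsig : ∀ i, ((σ (s i) : K) : ℝ) = Real.sqrt (n i)
      ∨ ((σ (s i) : K) : ℝ) = -Real.sqrt (n i) := by
    intro i
    have h1 : (s i) ^ 2 = algebraMap ℚ K ((n i : ℚ)) := by
      apply Subtype.ext
      push_cast
      exact hsq2 i
    have h2 : (σ (s i)) ^ 2 = (s i) ^ 2 := by
      rw [← map_pow, h1, AlgEquiv.commutes]
    have h3 : ((σ (s i) : K) : ℝ) ^ 2 = (Real.sqrt (n i)) ^ 2 := by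
      have h4 := congrArg (Subtype.val) h2
      push_cast at h4
      rw [h4]
    exact sq_eq_sq_iff_eq_or_eq_neg.mp h3
  have hσx : ((σ x : K) : ℝ) = (c₀ : ℝ) + ∑ i, (c i : ℝ) * ((σ (s i) : K) : ℝ) := by
    have h5 : σ x = (c₀ : K) + ∑ i, (c i : K) * σ (s i) := by
      rw [hxK]
      simp [map_sum, map_mul, map_ratCast]
    rw [h5]
    push_cast
    rfl
  constructor
  · intro heq
    set q : Fin m → ℚ :=
      fun i => if ((σ (s i) : K) : ℝ) = Real.sqrt (n i) then 0 else -2 * c i with hqdef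
    have hEq : (c₀ : ℝ) + ∑ i, (c i : ℝ) * ((σ (s i) : K) : ℝ)
        = (c₀ : ℝ) + ∑ i, (c i : ℝ) * Real.sqrt (n i) := by
      rw [← hσx, ← hx, heq]
    have hsum0 : ((0 : ℚ) : ℝ) + ∑ i, (q i : ℝ) * Real.sqrt (n i) = 0 := by
      have hterm : ∀ i ∈ Finset.univ, (q i : ℝ) * Real.sqrt (n i)
          = (c i : ℝ) * (((σ (s i) : K) : ℝ) - Real.sqrt (n i)) := by
        intro i _
        by_cases hcase : ((σ (s i) : K) : ℝ) = Real.sqrt (n i)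
        · simp [hqdef, hcase]
        · rcases hsig i with h | h
          · exact absurd h hcase
          · simp only [hqdef]; rw [if_neg hcase, h]; push_cast; ring
      rw [Finset.sum_congr rfl hterm]
      have hsplit : ∑ i : Fin m, (c i : ℝ) * (((σ (s i) : K) : ℝ) - Real.sqrt (n i))
          = (∑ i : Fin m, (c i : ℝ) * ((σ (s i) : K) : ℝ))
            - ∑ i : Fin m, (c i : ℝ) * Real.sqrt (n i) := by
        rw [← Finset.sum_sub_distrib]
        exact Finset.sum_congr rfl fun i _ => by ring
      rw [hsplit]
      push_cast
      linarith [hEq]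
    obtain ⟨-, hq0⟩ := indepLemma m n hn hsq 0 q hsum0
    have hfix : ∀ i, σ (s i) = s i := by
      intro i
      have := hq0 i
      by_cases hcase : ((σ (s i) : K) : ℝ) = Real.sqrt (n i)
      · exact Subtype.ext hcase
      · rw [hqdef] at this; simp only [if_neg hcase] at this
        exact absurd (by linarith [mul_comm (-2 : ℚ) (c i)] : c i = 0) (hc i)
    apply hσ
    have hAH : (σ : K →ₐ[ℚ] K) = ((AlgEquiv.refl : K ≃ₐ[ℚ] K) : K →ₐ[ℚ] K) := by
      apply IntermediateField.algHom_ext_of_eq_adjoin ℚ hK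
      rintro y ⟨i, rfl⟩
      exact hfix i
    exact AlgEquiv.ext fun y => AlgHom.congr_fun hAH y
  · intro heq
    set q : Fin m → ℚ :=
      fun i => if ((σ (s i) : K) : ℝ) = Real.sqrt (n i) then 2 * c i else 0 with hqdef
    have hEq : (c₀ : ℝ) + ∑ i, (c i : ℝ) * ((σ (s i) : K) : ℝ)
        = -((c₀ : ℝ) + ∑ i, (c i : ℝ) * Real.sqrt (n i)) := by
      rw [← hσx, ← hx, heq]
      push_cast
      rfl
    have hsum0 : ((2 * c₀ : ℚ) : ℝ) + ∑ i, (q i : ℝ) * Real.sqrt (n i) = 0 := by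
      have hterm : ∀ i ∈ Finset.univ, (q i : ℝ) * Real.sqrt (n i)
          = (c i : ℝ) * (((σ (s i) : K) : ℝ) + Real.sqrt (n i)) := by
        intro i _
        by_cases hcase : ((σ (s i) : K) : ℝ) = Real.sqrt (n i)
        · rw [hqdef]; simp only [if_pos hcase, hcase]; push_cast; ring
        · rcases hsig i with h | h
          · exact absurd h hcase
          · simp only [hqdef]; rw [if_neg hcase, h]; push_cast; ring
      rw [Finset.sum_congr rfl hterm]
      have hsplit : ∑ i : Fin m, (c i : ℝ) * (((σ (s i) : K) : ℝ) + Real.sqrt (n i))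
          = (∑ i : Fin m, (c i : ℝ) * ((σ (s i) : K) : ℝ))
            + ∑ i : Fin m, (c i : ℝ) * Real.sqrt (n i) := by
        rw [← Finset.sum_add_distrib]
        exact Finset.sum_congr rfl fun i _ => by ring
      rw [hsplit]
      push_cast
      linarith [hEq]
    obtain ⟨h0, -⟩ := indepLemma m n hn hsq (2 * c₀) q hsum0
    apply hc₀
    linarith [h0]
end

section
/- Let A ∈ GL_n(ℚ) with irreducible characteristic polynomial f_A over ℚ, let K be the splitting field of f_A, and let α₁, …, α_n ∈ K be the roots of f_A. Then A is diagonalizable over K, and for any rational prime p modulo which the orders are defined, the orders ord_p(α_i) in (O_K/pO_K)^× are equal for all i. -/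
open NumberField Polynomial Matrix

set_option synthInstance.maxHeartbeats 400000
set_option maxHeartbeats 1000000

theorem stmt_15 (n : ℕ) (A : Matrix (Fin n) (Fin n) ℚ) (hA : IsUnit A.det)
    (hirr : Irreducible A.charpoly)
    (K : Type*) [Field K] [NumberField K]
    (hsplit : Polynomial.IsSplittingField ℚ K A.charpoly)
    (α : Fin n → K)
    (hroots : A.charpoly.map (algebraMap ℚ K) = ∏ i, (X - C (α i)))
    -- write each root as a quotient of algebraic integers  α i = a i / b i
    (a b : Fin n → 𝓞 K) (hb : ∀ i, b i ≠ 0)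
    (hab : ∀ i, ((a i : K)) = α i * ((b i : K)))
    (p : ℕ) (hp : p.Prime)
    (ha' : ∀ i, IsUnit (Ideal.Quotient.mk (Ideal.span {(p : 𝓞 K)}) (a i)))
    (hb' : ∀ i, IsUnit (Ideal.Quotient.mk (Ideal.span {(p : 𝓞 K)}) (b i))) :
    (∃ P D : Matrix (Fin n) (Fin n) K, IsUnit P.det ∧ D.IsDiag ∧
        A.map (algebraMap ℚ K) = P⁻¹ * D * P) ∧
    ∀ i j, orderOf ((ha' i).unit * ((hb' i).unit)⁻¹) =
      orderOf ((ha' j).unit * ((hb' j).unit)⁻¹) := by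
  constructor
  · -- diagonalizability
    classical
    set M : Matrix (Fin n) (Fin n) K := A.map (algebraMap ℚ K) with hM
    -- roots are distinct
    have hsep : (∏ i, (X - C (α i))).Separable := by
      rw [← hroots]; exact (hirr.separable).map
    have hinj : Function.Injective α := separable_prod_X_sub_C_iff.mp hsep
    -- each α i is a root of charpoly of M
    have hcharM : M.charpoly = ∏ i, (X - C (α i)) := by
      rw [hM, Matrix.charpoly_map, hroots]
    have hev : ∀ i, (M.charpoly).eval (α i) = 0 := by
      intro i
      rw [hcharM, eval_prod]
      exact Finset.prod_eq_zero (Finset.mem_univ i) (by simp)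
    -- eigenvectors
    have hdet0 : ∀ i, (Mᵀ - (α i) • 1).det = 0 := by
      intro i
      have h1 : (M.charpoly).eval (α i)
          = ((M.charmatrix).map (evalRingHom (α i))).det := by
        rw [Matrix.charpoly, ← coe_evalRingHom, RingHom.map_det, RingHom.mapMatrix_apply]
      have h2 : (M.charmatrix).map (evalRingHom (α i)) = (α i) • 1 - M := by
        ext k l
        by_cases h : k = l
        · subst h; simp [charmatrix_apply_eq, Matrix.smul_apply, Matrix.one_apply]
        · simp [charmatrix_apply_ne _ _ _ h, Matrix.smul_apply, Matrix.one_apply, h]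
      have h3 : ((α i) • (1:Matrix (Fin n) (Fin n) K) - M).det = 0 := by
        rw [← h2, ← h1]; exact hev i
      have h4 : (Mᵀ - (α i) • 1).det = (-1)^n * ((α i) • 1 - M).det := by
        rw [show Mᵀ - (α i) • 1 = -(((α i) • 1 - M)ᵀ) by
          rw [Matrix.transpose_sub, Matrix.transpose_smul, Matrix.transpose_one]; abel,
          Matrix.det_neg, Matrix.det_transpose]
        simp
      rw [h4, h3, mul_zero]
    have hvec : ∀ i, ∃ v : Fin n → K, v ≠ 0 ∧ Mᵀ *ᵥ v = (α i) • v := by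
      intro i
      obtain ⟨v, hv0, hv⟩ := (Matrix.exists_mulVec_eq_zero_iff).mpr (hdet0 i)
      refine ⟨v, hv0, ?_⟩
      have := hv
      rw [Matrix.sub_mulVec, sub_eq_zero] at this
      rw [this, Matrix.smul_mulVec, Matrix.one_mulVec]
    choose v hv0 hveq using hvec
    rcases Nat.eq_zero_or_pos n with hn | hn
    · subst hn
      refine ⟨1, 0, by simp, Matrix.isDiag_zero, ?_⟩
      ext i j
      exact i.elim0
    haveI : Nonempty (Fin n) := ⟨⟨0, hn⟩⟩
    -- linear independence of eigenvectors
    have hli : LinearIndependent K v := by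
      apply Module.End.eigenvectors_linearIndependent' (Matrix.toLin' Mᵀ) α hinj
      intro i
      constructor
      · rw [Module.End.mem_eigenspace_iff, Matrix.toLin'_apply, hveq i]
      · exact hv0 i
    -- basis and invertibility
    have hcard : Fintype.card (Fin n) = Module.finrank K (Fin n → K) := by simp
    let bas : Module.Basis (Fin n) K (Fin n → K) := basisOfLinearIndependentOfCardEqFinrank hli hcard
    have hbas : ∀ i, bas i = v i := fun i => by
      simp [bas, coe_basisOfLinearIndependentOfCardEqFinrank]
    set P : Matrix (Fin n) (Fin n) K := Matrix.of v with hP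
    have hPdet : IsUnit P.det := by
      have : Invertible ((Pi.basisFun K (Fin n)).toMatrix bas) :=
        (Pi.basisFun K (Fin n)).invertibleToMatrix bas
      have hPT : (Pi.basisFun K (Fin n)).toMatrix bas = Pᵀ := by
        ext k l
        simp [Module.Basis.toMatrix_apply, hbas, hP]
      rw [hPT] at this
      have := Matrix.isUnit_det_of_invertible Pᵀ
      rwa [Matrix.det_transpose] at this
    refine ⟨P, Matrix.diagonal α, hPdet, Matrix.isDiag_diagonal α, ?_⟩
    have hPM : P * M = Matrix.diagonal α * P := by
      ext i j
      have := congrFun (hveq i) j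
      simp only [Matrix.mulVec, dotProduct, Matrix.transpose_apply, Pi.smul_apply,
        smul_eq_mul] at this
      rw [Matrix.mul_apply, Matrix.diagonal_mul]
      simp only [hP, Matrix.of_apply]
      rw [← this]
      exact Finset.sum_congr rfl fun k _ => mul_comm _ _
    calc M = P⁻¹ * P * M := by rw [Matrix.nonsing_inv_mul P hPdet, one_mul]
      _ = P⁻¹ * (P * M) := by rw [Matrix.mul_assoc]
      _ = P⁻¹ * Matrix.diagonal α * P := by rw [hPM, Matrix.mul_assoc]
  · -- equality of orders via Galois conjugation
    classical
    haveI := hsplit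
    haveI : Normal ℚ K := Normal.of_isSplittingField A.charpoly
    -- each α i is a root of charpoly over K
    have hev : ∀ i, aeval (α i) A.charpoly = 0 := by
      intro i
      rw [aeval_def, ← eval_map, hroots, eval_prod]
      exact Finset.prod_eq_zero (Finset.mem_univ i) (by simp)
    have hmin : ∀ i, minpoly ℚ (α i) = A.charpoly := fun i =>
      (minpoly.eq_of_irreducible_of_monic hirr (hev i) (A.charpoly_monic)).symm
    intro i j
    -- Galois conjugation sending α i to α j
    obtain ⟨σ, hσ⟩ : ∃ σ : K ≃ₐ[ℚ] K, σ (α i) = α j := by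
      apply minpoly.exists_algEquiv_of_root (Algebra.IsAlgebraic.isAlgebraic (α j))
      rw [hmin j]; exact hev i
    set σ' : (𝓞 K) ≃ₐ[ℤ] (𝓞 K) := galRestrict ℤ ℚ K (𝓞 K) σ with hσ'
    have hcomm : ∀ x : 𝓞 K, (algebraMap (𝓞 K) K) (σ' x) = σ ((algebraMap (𝓞 K) K) x) :=
      fun x => algebraMap_galRestrict_apply ℤ σ x
    -- key identity
    have key : σ' (a i) * b j = a j * σ' (b i) := by
      apply RingOfIntegers.coe_injective
      rw [_root_.map_mul, _root_.map_mul, hcomm (a i), hcomm (b i)]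
      rw [← RingOfIntegers.coe_eq_algebraMap, ← RingOfIntegers.coe_eq_algebraMap,
        ← RingOfIntegers.coe_eq_algebraMap, ← RingOfIntegers.coe_eq_algebraMap]
      rw [hab i, hab j, _root_.map_mul, hσ]
      ring
    set I : Ideal (𝓞 K) := Ideal.span {(p : 𝓞 K)} with hI
    have hImap : I = I.map (σ'.toRingEquiv : (𝓞 K) →+* (𝓞 K)) := by
      rw [hI, Ideal.map_span]
      congr 1
      simp
    set e : ((𝓞 K) ⧸ I) ≃+* ((𝓞 K) ⧸ I) := Ideal.quotientEquiv I I σ'.toRingEquiv hImap with he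
    have hemk : ∀ x : 𝓞 K, e (Ideal.Quotient.mk I x) = Ideal.Quotient.mk I (σ' x) :=
      fun x => Ideal.quotientEquiv_mk I I σ'.toRingEquiv hImap x
    set ui := (ha' i).unit * ((hb' i).unit)⁻¹ with hui
    set uj := (ha' j).unit * ((hb' j).unit)⁻¹ with huj
    have hmain : (Units.mapEquiv e.toMulEquiv) ui = uj := by
      apply Units.ext
      have hval : ((Units.mapEquiv e.toMulEquiv ui : ((𝓞 K) ⧸ I)ˣ) : (𝓞 K) ⧸ I)
          = e (ui : (𝓞 K) ⧸ I) := rfl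
      rw [hval]
      have hbiu : IsUnit (e (Ideal.Quotient.mk I (b i))) := (hb' i).map e
      have hcan : IsUnit ((Ideal.Quotient.mk I (b j)) * e (Ideal.Quotient.mk I (b i))) :=
        (hb' j).mul hbiu
      have hvi : (ui : (𝓞 K) ⧸ I) * (Ideal.Quotient.mk I (b i)) = Ideal.Quotient.mk I (a i) := by
        have h1 : ui * (hb' i).unit = (ha' i).unit := by rw [hui, inv_mul_cancel_right]
        have h2 := congrArg Units.val h1
        simpa using h2
      have hvj : (uj : (𝓞 K) ⧸ I) * (Ideal.Quotient.mk I (b j)) = Ideal.Quotient.mk I (a j) := by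
        have h1 : uj * (hb' j).unit = (ha' j).unit := by rw [huj, inv_mul_cancel_right]
        have h2 := congrArg Units.val h1
        simpa using h2
      apply hcan.mul_left_cancel
      calc (Ideal.Quotient.mk I (b j)) * e (Ideal.Quotient.mk I (b i)) * e (ui : (𝓞 K) ⧸ I)
          = (Ideal.Quotient.mk I (b j)) * e ((ui : (𝓞 K) ⧸ I) * (Ideal.Quotient.mk I (b i))) := by
            rw [_root_.map_mul]; ring
        _ = Ideal.Quotient.mk I (b j * σ' (a i)) := by rw [hvi, hemk, ← _root_.map_mul]
        _ = Ideal.Quotient.mk I (σ' (b i) * a j) := by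
            congr 1
            rw [mul_comm, key, mul_comm]
        _ = e (Ideal.Quotient.mk I (b i)) * ((uj : (𝓞 K) ⧸ I) * (Ideal.Quotient.mk I (b j))) := by
            rw [hvj, _root_.map_mul, hemk]
        _ = (Ideal.Quotient.mk I (b j)) * e (Ideal.Quotient.mk I (b i)) * (uj : (𝓞 K) ⧸ I) := by
            ring
    rw [← hmain]
    exact ((Units.mapEquiv e.toMulEquiv).orderOf_eq ui).symm
end

section
/- Let A ∈ GL_n(ℚ) be diagonalizable over the splitting field K of its characteristic polynomial, with eigenvalues α₁, …, α_n ∈ O_K (up to denominators). Then for all sufficiently large rational primes p (avoiding denominators of A, of a conjugating matrix U, det(U), and primes dividing any α_i), the order of A mod p in GL_n(𝔽_p) equals lcm(ord_p(α₁), …, ord_p(α_n)), where ord_p(α_i) is the order of α_i in (O_K/pO_K)^×. -/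
open NumberField Matrix

set_option maxHeartbeats 1000000
set_option synthInstance.maxHeartbeats 400000

private lemma not_isUnit_cast_prime (K : Type*) [Field K] [NumberField K]
    {p : ℕ} (hp : p.Prime) : ¬ IsUnit (p : 𝓞 K) := by
  intro h
  rw [NumberField.isUnit_iff_norm] at h
  have h1 : RingOfIntegers.norm ℚ ((p : 𝓞 K)) = (p : 𝓞 ℚ) ^ Module.finrank ℚ K := by
    rw [show ((p : 𝓞 K)) = algebraMap (𝓞 ℚ) (𝓞 K) (p : 𝓞 ℚ) by simp]
    exact RingOfIntegers.norm_algebraMap (K := ℚ) (L := K) _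
  rw [h1] at h
  have h2 : (((p : 𝓞 ℚ) ^ Module.finrank ℚ K : 𝓞 ℚ) : ℚ) = (p : ℚ) ^ Module.finrank ℚ K := by
    push_cast; ring
  rw [h2, abs_of_nonneg (by positivity)] at h
  have h3 : (1 : ℚ) < (p : ℚ) ^ Module.finrank ℚ K :=
    one_lt_pow₀ (by exact_mod_cast hp.one_lt) Module.finrank_pos.ne'
  linarith

theorem stmt_17 (n : ℕ) (A : Matrix (Fin n) (Fin n) ℚ) (hA : IsUnit A.det)
    (K : Type*) [Field K] [NumberField K]
    (hsplit : Polynomial.IsSplittingField ℚ K A.charpoly)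
    -- denominators of A : A = A₀ / d
    (d : ℤ) (hd : d ≠ 0) (A₀ : Matrix (Fin n) (Fin n) ℤ)
    (hAd : ∀ i j, A i j = (A₀ i j : ℚ) / (d : ℚ))
    -- A is diagonalizable over K:  U * A = D * U  with  U ∈ Mₙ(O_K), det U ≠ 0
    (α : Fin n → 𝓞 K) (U : Matrix (Fin n) (Fin n) (𝓞 K))
    (hU : (U.map (algebraMap (𝓞 K) K)).det ≠ 0)
    (hconj : U.map (algebraMap (𝓞 K) K) * A.map (algebraMap ℚ K) =
      (Matrix.diagonal fun i => ((α i : K))) * U.map (algebraMap (𝓞 K) K)) :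
    ∃ N : ℕ, ∀ p : ℕ, N < p → p.Prime →
      ¬ (p : ℤ) ∣ d →
      IsUnit (Ideal.Quotient.mk (Ideal.span {(p : 𝓞 K)}) U.det) →
      ∀ hα : ∀ i, IsUnit (Ideal.Quotient.mk (Ideal.span {(p : 𝓞 K)}) (α i)),
        orderOf (((d : ZMod p))⁻¹ • A₀.map (Int.cast : ℤ → ZMod p)) =
          Finset.univ.lcm fun i => orderOf (hα i).unit := by
  classical
  refine ⟨0, fun p _ hp hpd hUdet hα => ?_⟩
  haveI : Fact p.Prime := ⟨hp⟩
  set I : Ideal (𝓞 K) := Ideal.span {(p : 𝓞 K)} with hI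
  -- the quotient is nontrivial of characteristic p
  have hItop : I ≠ ⊤ := by
    rw [hI, Ne, Ideal.span_singleton_eq_top]
    exact not_isUnit_cast_prime K hp
  haveI : Nontrivial (𝓞 K ⧸ I) := Ideal.Quotient.nontrivial_iff.mpr hItop
  have hp0 : (p : 𝓞 K ⧸ I) = 0 := by
    rw [← map_natCast (Ideal.Quotient.mk I) p]
    exact Ideal.Quotient.eq_zero_iff_mem.mpr (Ideal.mem_span_singleton_self _)
  haveI : CharP (𝓞 K ⧸ I) p := (CharP.charP_iff_prime_eq_zero hp).mpr hp0
  let φ : ZMod p →+* 𝓞 K ⧸ I := ZMod.castHom dvd_rfl (𝓞 K ⧸ I)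
  have hφ : Function.Injective φ := φ.injective
  -- the equation over K with integral matrices
  have hdK : ((d : K)) ≠ 0 := Int.cast_ne_zero.mpr hd
  have hA0K : (A₀.map fun x : ℤ => ((x : K))) = (d : K) • A.map (algebraMap ℚ K) := by
    ext i j
    simp only [Matrix.map_apply, Matrix.smul_apply, hAd i j, map_div₀, smul_eq_mul,
      map_intCast]
    rw [mul_comm, div_mul_cancel₀ _ hdK]
  have hKconj : U.map (algebraMap (𝓞 K) K) * (A₀.map fun x : ℤ => ((x : K))) =
      Matrix.diagonal (fun i => (algebraMap (𝓞 K) K) ((d : 𝓞 K) * α i)) *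
        U.map (algebraMap (𝓞 K) K) := by
    have hfun : (fun i => (algebraMap (𝓞 K) K) ((d : 𝓞 K) * α i)) =
        (d : K) • (fun i => ((α i : K))) := by
      funext i
      simp only [_root_.map_mul, map_intCast, Pi.smul_apply, smul_eq_mul]
    rw [hA0K, Matrix.mul_smul, hconj, hfun, Matrix.diagonal_smul, Matrix.smul_mul]
  -- descend to 𝓞 K
  have hinj : Function.Injective (algebraMap (𝓞 K) K) := RingOfIntegers.coe_injective
  have hOK : U * (A₀.map fun x : ℤ => ((x : 𝓞 K))) =
      Matrix.diagonal (fun i => (d : 𝓞 K) * α i) * U := by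
    apply Matrix.map_injective hinj
    show (U * (A₀.map fun x : ℤ => ((x : 𝓞 K)))).map (algebraMap (𝓞 K) K) =
      ((Matrix.diagonal fun i => (d : 𝓞 K) * α i) * U).map (algebraMap (𝓞 K) K)
    rw [Matrix.map_mul, Matrix.map_mul, Matrix.map_map,
      Matrix.diagonal_map (map_zero (algebraMap (𝓞 K) K))]
    rw [show ((A₀.map (⇑(algebraMap (𝓞 K) K) ∘ fun x : ℤ => ((x : 𝓞 K))))) =
        A₀.map fun x : ℤ => ((x : K)) by
      ext i j
      simp only [Matrix.map_apply, Function.comp_apply, map_intCast]]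
    exact hKconj
  -- reduce mod p
  set ψ : 𝓞 K →+* 𝓞 K ⧸ I := Ideal.Quotient.mk I with hψ
  set Ub : Matrix (Fin n) (Fin n) (𝓞 K ⧸ I) := U.map ψ with hUb
  set C : Matrix (Fin n) (Fin n) (𝓞 K ⧸ I) := A₀.map (fun x : ℤ => ((x : 𝓞 K ⧸ I))) with hC
  have hRconj : Ub * C = Matrix.diagonal (fun i => (d : 𝓞 K ⧸ I) * ψ (α i)) * Ub := by
    have h := congrArg (fun M => M.map ψ) hOK
    have h2 : (U * (A₀.map fun x : ℤ => ((x : 𝓞 K)))).map ψ =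
        ((Matrix.diagonal fun i => (d : 𝓞 K) * α i) * U).map ψ := h
    rw [Matrix.map_mul, Matrix.map_mul, Matrix.map_map,
      Matrix.diagonal_map (map_zero ψ)] at h2
    have h3 : (fun m => ψ ((d : 𝓞 K) * α m)) = fun i => (d : 𝓞 K ⧸ I) * ψ (α i) := by
      funext i; rw [_root_.map_mul, map_intCast]
    have h4 : (A₀.map fun x : ℤ => ψ ((x : 𝓞 K))) = C := by
      rw [hC]; ext i j
      simp only [Matrix.map_apply, map_intCast]
    rw [Function.comp_def, h3, h4] at h2
    exact h2
  -- Ub is invertible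
  have hUbdet : IsUnit Ub.det := by
    rw [hUb, show (U.map ψ) = ψ.mapMatrix U from rfl, ← RingHom.map_det]
    exact hUdet
  have hUbu : IsUnit Ub := (Matrix.isUnit_iff_isUnit_det Ub).mpr hUbdet
  set V : (Matrix (Fin n) (Fin n) (𝓞 K ⧸ I))ˣ := hUbu.unit with hV
  have hVc : (V : Matrix (Fin n) (Fin n) (𝓞 K ⧸ I)) = Ub := hUbu.unit_spec
  -- the matrix B and its image
  set B : Matrix (Fin n) (Fin n) (ZMod p) :=
    ((d : ZMod p))⁻¹ • A₀.map (Int.cast : ℤ → ZMod p) with hB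
  have hdZ : ((d : ZMod p)) ≠ 0 := fun h => hpd ((ZMod.intCast_zmod_eq_zero_iff_dvd d p).mp h)
  have hed : φ ((d : ZMod p))⁻¹ * ((d : 𝓞 K ⧸ I)) = 1 := by
    rw [show ((d : 𝓞 K ⧸ I)) = φ ((d : ZMod p)) by rw [map_intCast], ← _root_.map_mul,
      inv_mul_cancel₀ hdZ, _root_.map_one]
  have hCval : C = (d : 𝓞 K ⧸ I) •
      ((V⁻¹ : _) * Matrix.diagonal (fun i => ψ (α i)) * (V : _)) := by
    have h1 : C = (V⁻¹ : (Matrix (Fin n) (Fin n) (𝓞 K ⧸ I))ˣ) * (Ub * C) := by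
      rw [← mul_assoc, ← hVc, ← Units.val_mul, inv_mul_cancel, Units.val_one, one_mul]
    rw [h1, hRconj, show Matrix.diagonal (fun i => (d : 𝓞 K ⧸ I) * ψ (α i)) =
        (d : 𝓞 K ⧸ I) • Matrix.diagonal (fun i => ψ (α i)) by
      rw [← Matrix.diagonal_smul]; congr 1]
    rw [Matrix.smul_mul, Matrix.mul_smul, mul_assoc, hVc]
  have hBconj : φ.mapMatrix B =
      (V⁻¹ : _) * Matrix.diagonal (fun i => ψ (α i)) * (V : _) := by
    have h1 : φ.mapMatrix B = φ ((d : ZMod p))⁻¹ • C := by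
      ext i j
      simp only [hB, hC, RingHom.mapMatrix_apply, Matrix.map_apply, Matrix.smul_apply,
        smul_eq_mul, _root_.map_mul, map_intCast]
    rw [h1, hCval, smul_smul, hed, one_smul]
  -- key characterization of powers
  have minj : Function.Injective (φ.mapMatrix :
      Matrix (Fin n) (Fin n) (ZMod p) →+* Matrix (Fin n) (Fin n) (𝓞 K ⧸ I)) :=
    fun M N h => Matrix.map_injective hφ h
  have key : ∀ k : ℕ, B ^ k = 1 ↔ ∀ i, (ψ (α i)) ^ k = 1 := by
    intro k
    rw [← minj.eq_iff, map_pow, _root_.map_one, hBconj, Units.conj_pow']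
    constructor
    · intro h
      have h2 := congrArg
        (fun X => (V : Matrix (Fin n) (Fin n) (𝓞 K ⧸ I)) * X * (V⁻¹ : _)) h
      simp only [Units.mul_inv_cancel_left, Units.mul_inv_cancel_right, mul_one,
        ← mul_assoc] at h2
      rw [Matrix.diagonal_pow] at h2
      intro i
      have h3 := congrFun (congrFun h2 i) i
      simpa using h3
    · intro h
      have h2 : Matrix.diagonal (fun i => ψ (α i)) ^ k = 1 := by
        rw [Matrix.diagonal_pow, ← Matrix.diagonal_one]
        exact congrArg Matrix.diagonal (funext fun i => by simpa using h i)
      rw [h2, mul_one, ← Units.val_mul, inv_mul_cancel, Units.val_one]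
  -- conclude
  have hαo : ∀ i, orderOf (ψ (α i)) = orderOf (hα i).unit := fun i => by
    have h := orderOf_units (y := (hα i).unit)
    rw [(hα i).unit_spec] at h
    exact h
  apply Nat.dvd_antisymm
  · apply orderOf_dvd_of_pow_eq_one
    rw [key]
    intro i
    apply orderOf_dvd_iff_pow_eq_one.mp
    rw [hαo i]
    exact Finset.dvd_lcm (Finset.mem_univ i)
  · refine Finset.lcm_dvd fun i _ => ?_
    rw [← hαo i]
    apply orderOf_dvd_of_pow_eq_one
    exact (key _).mp (pow_orderOf_eq_one B) i
end
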